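/- Let L be a complete lattice with its Scott topology and the join-cone structure (x+y = x∨y, r·x = x for r>0, ⊥ for r=0). For every continuous valuation ν on L, the supremum of the support of ν is a barycentre of ν, where the support of ν is the complement of the largest open set of ν-measure zero. -/

import Mathlib

open Set ENNReal NNReal TopologicalSpace MeasureTheory
open scoped Classical

/-- A continuous valuation on a topological space `X`: a strict, monotone, modular,
Scott-continuous map from the open sets of `X` to `ℝ≥0∞`. -/
structure ContValuation (X : Type*) [TopologicalSpace X] where
  toFun : Opens X → ℝ≥0∞
  strict' : toFun ⊥ = 0
  mono' : ∀ U V : Opens X, U ≤ V → toFun U ≤ toFun V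
  modular' : ∀ U V : Opens X, toFun U + toFun V = toFun (U ⊔ V) + toFun (U ⊓ V)
  scott' : ∀ S : Set (Opens X), S.Nonempty → DirectedOn (· ≤ ·) S →
    toFun (sSup S) = ⨆ U ∈ S, toFun U

/-- The stochastic order on continuous valuations: pointwise order on open sets. -/
def stochLE {X : Type*} [TopologicalSpace X] (μ ν : ContValuation X) : Prop :=
  ∀ U : Opens X, μ.toFun U ≤ ν.toFun U

/-- The Choquet integral `∫ h dμ = ∫₀^∞ μ(h⁻¹(r,∞]) dr` of a lower semicontinuous
function `h : X → ℝ≥0∞` with respect to a continuous valuation `μ`. -/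
noncomputable def choquet {X : Type*} [TopologicalSpace X] (μ : ContValuation X)
    (h : X → ℝ≥0∞) (hh : LowerSemicontinuous h) : ℝ≥0∞ :=
  ∫⁻ r in Set.Ioi (0 : ℝ), μ.toFun ⟨h ⁻¹' Set.Ioi (ENNReal.ofReal r), hh.isOpen_preimage _⟩

/-- Linearity of a functional `Λ : L → [0,∞]` with respect to the join-cone structure on
a complete lattice `L` (`x + y = x ⊔ y`, `r · x = x` if `r > 0` and `⊥` if `r = 0`):
`Λ(r·x + s·y) = r·Λ(x) + s·Λ(y)`. -/
def JoinConeLinear {L : Type*} [CompleteLattice L] (Λ : L → ℝ≥0∞) : Prop :=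
  ∀ (r s : ℝ≥0) (x y : L),
    Λ ((if r = 0 then ⊥ else x) ⊔ (if s = 0 then ⊥ else y)) =
      (r : ℝ≥0∞) * Λ x + (s : ℝ≥0∞) * Λ y

/-- The support of a continuous valuation `ν`: the complement of the largest open set of
`ν`-measure zero. -/
def ContValuation.supp {X : Type*} [TopologicalSpace X] (ν : ContValuation X) : Set X :=
  (↑(sSup {U : Opens X | ν.toFun U = 0}) : Set X)ᶜ

/-!
A join-linear `Λ` satisfies `Λ x = Λ x + Λ x`, so it only takes the values `0` and `∞`.
Its zero set is Scott-closed, contains `⊥` and is closed under binary joins, hence (taking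
directed suprema of finite joins) under all joins. The Choquet integral of such a `Λ` is
`ν {Λ > 0} · ∞`, and `ν {Λ > 0} = 0` exactly when `supp ν` lies in the zero set of `Λ`,
that is, when `Λ (⋁ supp ν) = 0`.
-/

lemma SupClosed.sSup_mem_of_dirSupClosed {α : Type*} [CompleteLattice α] {s t : Set α}
    (hs : SupClosed s) (hd : DirSupClosed s) (hbot : ⊥ ∈ s) (hts : t ⊆ s) : sSup t ∈ s := by
  have hsub : supClosure (insert ⊥ t) ⊆ s := supClosure_min (insert_subset hbot hts) hs
  have hsup : sSup (supClosure (insert ⊥ t)) = sSup t := by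
    rw [(isLUB_supClosure.mpr (isLUB_sSup _)).sSup_eq, sSup_insert, bot_sup_eq]
  rw [← hsup]
  exact dirSupClosed_iff_forall_sSup.mp hd hsub
    ⟨⊥, subset_supClosure (mem_insert _ _)⟩ supClosed_supClosure.directedOn

namespace ContValuation

variable {X : Type*} [TopologicalSpace X] (ν : ContValuation X)

lemma toFun_sup_eq_zero {U V : Opens X} (hU : ν.toFun U = 0) (hV : ν.toFun V = 0) :
    ν.toFun (U ⊔ V) = 0 := by
  have h := ν.modular' U V
  rw [hU, hV, zero_add] at h
  exact le_antisymm (h ▸ le_self_add) zero_le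

lemma toFun_sSup_null : ν.toFun (sSup {U : Opens X | ν.toFun U = 0}) = 0 := by
  have hdir : DirectedOn (· ≤ ·) {U : Opens X | ν.toFun U = 0} := fun U hU V hV =>
    ⟨U ⊔ V, ν.toFun_sup_eq_zero hU hV, le_sup_left, le_sup_right⟩
  rw [ν.scott' _ ⟨⊥, ν.strict'⟩ hdir]
  simp only [ENNReal.iSup_eq_zero]
  exact fun _ hU => hU

lemma toFun_eq_zero_iff_supp_subset_compl (U : Opens X) :
    ν.toFun U = 0 ↔ ν.supp ⊆ (U : Set X)ᶜ := by
  rw [supp, compl_subset_compl]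
  refine ⟨fun hU => le_sSup (α := Opens X) hU, fun hU => ?_⟩
  exact le_antisymm (ν.toFun_sSup_null ▸ ν.mono' U _ hU) zero_le

end ContValuation

lemma choquet_eq_mul_top_of_eq_zero_or_eq_top {X : Type*} [TopologicalSpace X]
    (μ : ContValuation X) {h : X → ℝ≥0∞} (hh : LowerSemicontinuous h)
    (h01 : ∀ x, h x = 0 ∨ h x = ⊤) :
    choquet μ h hh = μ.toFun ⟨h ⁻¹' Ioi 0, hh.isOpen_preimage 0⟩ * ⊤ := by
  have hlevel : ∀ r ∈ Ioi (0 : ℝ),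
      h ⁻¹' Ioi (ENNReal.ofReal r) = h ⁻¹' Ioi 0 := fun r hr => by
    ext x
    rcases h01 x with hx | hx <;> simp [hx]
  unfold choquet
  rw [setLIntegral_congr_fun (g := fun _ => μ.toFun ⟨h ⁻¹' Ioi 0, hh.isOpen_preimage 0⟩)
    measurableSet_Ioi fun r hr => congrArg μ.toFun (Opens.ext (hlevel r hr)),
    setLIntegral_const, Real.volume_Ioi]

namespace JoinConeLinear

variable {L : Type*} [CompleteLattice L] {Λ : L → ℝ≥0∞}

lemma map_bot (hΛ : JoinConeLinear Λ) : Λ ⊥ = 0 := by simpa using hΛ 0 0 ⊥ ⊥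

lemma map_sup (hΛ : JoinConeLinear Λ) (x y : L) : Λ (x ⊔ y) = Λ x + Λ y := by
  simpa using hΛ 1 1 x y

lemma monotone (hΛ : JoinConeLinear Λ) : Monotone Λ := fun x y hxy => by
  rw [← sup_eq_right.mpr hxy, hΛ.map_sup]
  exact le_self_add

lemma eq_zero_or_eq_top (hΛ : JoinConeLinear Λ) (x : L) : Λ x = 0 ∨ Λ x = ⊤ := by
  have h := hΛ.map_sup x x
  rw [sup_idem] at h
  by_contra! hx
  exact (ENNReal.lt_add_right hx.2 hx.1).ne h

lemma map_sSup_eq_zero_iff [TopologicalSpace L] [Topology.IsScott L univ]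
    (hΛ : JoinConeLinear Λ) (hlsc : LowerSemicontinuous Λ) (s : Set L) :
    Λ (sSup s) = 0 ↔ ∀ x ∈ s, Λ x = 0 := by
  refine ⟨fun h x hx => le_antisymm (h ▸ hΛ.monotone (le_sSup hx)) zero_le, fun h => ?_⟩
  have hclosed : IsClosed (Λ ⁻¹' {0}) := by
    convert (hlsc.isOpen_preimage 0).isClosed_compl using 1
    ext x
    simp
  have hsup : SupClosed (Λ ⁻¹' {0}) := fun x hx y hy => by
    simp_all [hΛ.map_sup x y]
  exact hsup.sSup_mem_of_dirSupClosed (Topology.IsScott.dirSupClosed_of_isClosed hclosed)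
    hΛ.map_bot h

end JoinConeLinear

/-- Let `L` be a complete lattice with its Scott topology and the join-cone structure.
For every continuous valuation `ν` on `L`, the supremum of the support of `ν` is a
barycentre of `ν`: `Λ(⋁ supp ν) = ∫ Λ dν` for every lower semicontinuous functional `Λ`
that is linear for the join-cone structure. -/
theorem joinCone_sSup_supp_barycentre
    (L : Type*) [CompleteLattice L] [TopologicalSpace L] [Topology.IsScott L Set.univ]
    (ν : ContValuation L) :
    ∀ (Λ : L → ℝ≥0∞) (hΛ : LowerSemicontinuous Λ), JoinConeLinear Λ →
      Λ (sSup ν.supp) = choquet ν Λ hΛ := by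
  intro Λ hΛ hlin
  rw [choquet_eq_mul_top_of_eq_zero_or_eq_top ν hΛ hlin.eq_zero_or_eq_top]
  have hzero_iff : Λ (sSup ν.supp) = 0 ↔ ν.toFun ⟨Λ ⁻¹' Ioi 0, hΛ.isOpen_preimage 0⟩ = 0 := by
    rw [hlin.map_sSup_eq_zero_iff hΛ, ν.toFun_eq_zero_iff_supp_subset_compl]
    simp [subset_def]
  by_cases hν : ν.toFun ⟨Λ ⁻¹' Ioi 0, hΛ.isOpen_preimage 0⟩ = 0
  · rw [hν, zero_mul, hzero_iff.mpr hν]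
  · rw [ENNReal.mul_top hν]
    exact (hlin.eq_zero_or_eq_top _).resolve_left (mt hzero_iff.mp hν)
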